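/- Let a ∈ ℂ with 0 < |a| < 1, and let ω_a = (1 − √(1 − |a|²))/conj(a) be the fixed point of φ_a in the open unit disk. Then for every z ∈ ℂ with |z| < 1, φ_a(φ_{ω_a}(z)) = φ_{ω_a}(−z). -/

import Mathlib

open Complex

/-!
Writing `r = |w|²`, the point `a = 2w/(1 + r)` satisfies
`φ_a(φ_w(z)) = (1 - r)(w + z) / ((1 - r)(1 + conj(w) z)) = φ_w(-z)` by direct computation.
The fixed point `ω_a` is exactly such a `w`: `|ω_a|² = (1 - s)/(1 + s)` with `s = √(1 - |a|²)`,
so `2ω_a/(1 + |ω_a|²) = (1 + s)(1 - s)/conj(a) = a`.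
-/

open ComplexConjugate

noncomputable def mobius (b z : ℂ) : ℂ := (b - z) / (1 - conj b * z)

noncomputable def mobiusFixedPoint (a : ℂ) : ℂ := (1 - (Real.sqrt (1 - ‖a‖ ^ 2) : ℂ)) / conj a

lemma one_add_mul_conj_ne_zero (w : ℂ) : 1 + w * conj w ≠ 0 := by
  rw [mul_conj, ← ofReal_one, ← ofReal_add, ofReal_ne_zero]
  exact (add_pos_of_pos_of_nonneg one_pos (normSq_nonneg w)).ne'

lemma one_sub_conj_mul_ne_zero {w z : ℂ} (hw : ‖w‖ < 1) (hz : ‖z‖ ≤ 1) :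
    1 - conj w * z ≠ 0 := by
  have : ‖conj w * z‖ < 1 := by
    rw [norm_mul, norm_conj]
    nlinarith [norm_nonneg w, norm_nonneg z]
  intro h
  rw [← sub_eq_zero.mp h, norm_one] at this
  exact this.false

theorem mobius_two_mul_div_comp_mobius {w z : ℂ} (hw : ‖w‖ ≠ 1) (h : 1 - conj w * z ≠ 0) :
    mobius (2 * w / (1 + w * conj w)) (mobius w z) = mobius w (-z) := by
  have hr : w * conj w = (‖w‖ ^ 2 : ℝ) := by rw [mul_conj, normSq_eq_norm_sq]
  have hr₁ : (1 : ℂ) - w * conj w ≠ 0 := by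
    rw [hr, ← ofReal_one, ← ofReal_sub, ofReal_ne_zero, sub_ne_zero]
    exact fun hw1 => hw (by nlinarith [norm_nonneg w])
  have hr₂ := one_add_mul_conj_ne_zero w
  have hnum : 2 * w / (1 + w * conj w) - mobius w z
      = (1 - w * conj w) * (w + z) / ((1 + w * conj w) * (1 - conj w * z)) := by
    rw [mobius]; field_simp; ring
  have hden : 1 - conj (2 * w / (1 + w * conj w)) * mobius w z
      = (1 - w * conj w) * (1 + conj w * z) / ((1 + w * conj w) * (1 - conj w * z)) := by
    have hr₂' : 1 + conj w * w ≠ 0 := by rwa [mul_comm]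
    simp only [mobius, map_div₀, map_mul, map_add, map_one, map_ofNat, conj_conj]
    field_simp; ring
  rw [mobius, hnum, hden, div_div_div_cancel_right₀ (mul_ne_zero hr₂ h),
    mul_div_mul_left _ _ hr₁, mobius, mul_neg, sub_neg_eq_add, sub_neg_eq_add]

lemma sqrt_one_sub_norm_sq_sq {a : ℂ} (ha : ‖a‖ ≤ 1) :
    Real.sqrt (1 - ‖a‖ ^ 2) ^ 2 = 1 - ‖a‖ ^ 2 :=
  Real.sq_sqrt (by nlinarith [norm_nonneg a])

lemma norm_mobiusFixedPoint_lt_one {a : ℂ} (ha : ‖a‖ < 1) : ‖mobiusFixedPoint a‖ < 1 := by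
  rcases eq_or_ne a 0 with rfl | ha0
  · simp [mobiusFixedPoint]
  set s := Real.sqrt (1 - ‖a‖ ^ 2)
  have hs2 : s ^ 2 = 1 - ‖a‖ ^ 2 := sqrt_one_sub_norm_sq_sq ha.le
  have hs0 : 0 < s := Real.sqrt_pos.mpr (by nlinarith [norm_nonneg a])
  have ha0' : 0 < ‖a‖ := norm_pos_iff.mpr ha0
  have hs1 : s < 1 := by nlinarith
  rw [mobiusFixedPoint, norm_div, norm_conj, ← ofReal_one, ← ofReal_sub, norm_real,
    Real.norm_of_nonneg (by linarith), div_lt_one ha0']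
  nlinarith

lemma two_mul_mobiusFixedPoint_div {a : ℂ} (ha : ‖a‖ ≤ 1) :
    2 * mobiusFixedPoint a / (1 + mobiusFixedPoint a * conj (mobiusFixedPoint a)) = a := by
  rcases eq_or_ne a 0 with rfl | ha0
  · simp [mobiusFixedPoint]
  have hconj : conj a ≠ 0 := (map_ne_zero _).mpr ha0
  have haa : a * conj a = 1 - (Real.sqrt (1 - ‖a‖ ^ 2) : ℂ) ^ 2 := by
    rw [mul_conj, normSq_eq_norm_sq, ← ofReal_pow, sqrt_one_sub_norm_sq_sq ha]
    push_cast; ring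
  rw [div_eq_iff (one_add_mul_conj_ne_zero _), mobiusFixedPoint]
  simp only [map_div₀, map_sub, map_one, conj_ofReal, conj_conj]
  field_simp
  linear_combination -haa

theorem stmt_10_general (a : ℂ) (ha1 : ‖a‖ < 1)
    (φ : ℂ → ℂ → ℂ) (hφ : ∀ b z : ℂ, φ b z = (b - z) / (1 - (starRingEnd ℂ) b * z))
    (ω : ℂ) (hω : ω = (1 - (Real.sqrt (1 - ‖a‖ ^ 2) : ℂ)) / (starRingEnd ℂ) a) :
    ∀ z : ℂ, ‖z‖ < 1 → φ a (φ ω z) = φ ω (-z) := by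
  have hφ' : φ = mobius := funext fun b => funext (hφ b)
  have hω' : ω = mobiusFixedPoint a := by rw [hω, mobiusFixedPoint]
  subst hφ' hω'
  intro z hz
  have hω1 := norm_mobiusFixedPoint_lt_one ha1
  have key := mobius_two_mul_div_comp_mobius hω1.ne (one_sub_conj_mul_ne_zero hω1 hz.le)
  rwa [two_mul_mobiusFixedPoint_div ha1.le] at key

/-- For `0 < |a| < 1` with `ω_a` the fixed point of `φ_a` in the disk, one has
`φ_a(φ_{ω_a}(z)) = φ_{ω_a}(−z)` for all `z` in the open unit disk. -/
theorem stmt_10 (a : ℂ) (ha0 : 0 < ‖a‖) (ha1 : ‖a‖ < 1)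
    (φ : ℂ → ℂ → ℂ) (hφ : ∀ b z : ℂ, φ b z = (b - z) / (1 - (starRingEnd ℂ) b * z))
    (ω : ℂ) (hω : ω = (1 - (Real.sqrt (1 - ‖a‖ ^ 2) : ℂ)) / (starRingEnd ℂ) a) :
    ∀ z : ℂ, ‖z‖ < 1 → φ a (φ ω z) = φ ω (-z) :=
  stmt_10_general a ha1 φ hφ ω hω
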